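/- arXiv:2505.00317 — 3 statements merged into one kernel-verified Lean document; each statement's English description precedes it below -/
import Mathlib

section
/- (Completion of squares for Bregman divergences) Let φ₁, φ₂: ℝⁿ → ℝ be strictly convex and differentiable, and let x, y, z ∈ ℝⁿ. If x* satisfies ∇(φ₁+φ₂)(x*) = ∇φ₁(y) + ∇φ₂(z), then D_{φ₁}(x,y) + D_{φ₂}(x,z) = D_{φ₁+φ₂}(x, x*) + D_{φ₁}(x*, y) + D_{φ₂}(x*, z). -/
open RealInnerProductSpace

noncomputable def bregman {n : ℕ} (φ : EuclideanSpace ℝ (Fin n) → ℝ)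
    (x y : EuclideanSpace ℝ (Fin n)) : ℝ :=
  φ x - φ y - ⟪gradient φ y, x - y⟫

theorem bregman_completion_of_squares {n : ℕ}
    (φ₁ φ₂ : EuclideanSpace ℝ (Fin n) → ℝ)
    (hconv₁ : StrictConvexOn ℝ Set.univ φ₁)
    (hconv₂ : StrictConvexOn ℝ Set.univ φ₂)
    (hdiff₁ : Differentiable ℝ φ₁)
    (hdiff₂ : Differentiable ℝ φ₂)
    (x y z xstar : EuclideanSpace ℝ (Fin n))
    (hstar : gradient (φ₁ + φ₂) xstar = gradient φ₁ y + gradient φ₂ z) :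
    bregman φ₁ x y + bregman φ₂ x z =
      bregman (φ₁ + φ₂) x xstar + bregman φ₁ xstar y + bregman φ₂ xstar z := by
  simp only [bregman, Pi.add_apply, hstar, inner_add_left, inner_sub_right]
  ring
end

section
/- (Expectation property of Bregman divergence) Let φ: ℝⁿ → ℝ be strictly convex and differentiable with invertible gradient map, x ∈ ℝⁿ deterministic, and y an integrable random variable in ℝⁿ. Set μ := (∇φ)⁻¹(E[∇φ(y)]). Then E[D_φ(x,y)] = D_φ(x, μ) + E[D_φ(μ, y)]. -/
open RealInnerProductSpace MeasureTheory

theorem bregman_expectation_property {n : ℕ}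
    {Ω : Type*} [MeasurableSpace Ω] (P : Measure Ω) [IsProbabilityMeasure P]
    (φ : EuclideanSpace ℝ (Fin n) → ℝ)
    (hconv : StrictConvexOn ℝ Set.univ φ)
    (hdiff : Differentiable ℝ φ)
    (hbij : Function.Bijective (gradient φ))
    (x : EuclideanSpace ℝ (Fin n))
    (y : Ω → EuclideanSpace ℝ (Fin n))
    (hy : Integrable y P)
    (hφy : Integrable (fun ω => φ (y ω)) P)
    (hgy : Integrable (fun ω => gradient φ (y ω)) P)
    (hinner : Integrable (fun ω => ⟪gradient φ (y ω), y ω⟫) P)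
    (μ : EuclideanSpace ℝ (Fin n))
    (hμ : gradient φ μ = ∫ ω, gradient φ (y ω) ∂P) :
    ∫ ω, bregman φ x (y ω) ∂P =
      bregman φ x μ + ∫ ω, bregman φ μ (y ω) ∂P := by
  have hin : ∀ z : EuclideanSpace ℝ (Fin n),
      Integrable (fun ω => ⟪gradient φ (y ω), z⟫) P := fun z => hgy.inner_const z
  have key : ∀ z : EuclideanSpace ℝ (Fin n),
      ∫ ω, bregman φ z (y ω) ∂P =
        φ z - (∫ ω, φ (y ω) ∂P) - (⟪gradient φ μ, z⟫ - ∫ ω, ⟪gradient φ (y ω), y ω⟫ ∂P) := by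
    intro z
    have h1 : (fun ω => bregman φ z (y ω)) =
        fun ω => φ z - φ (y ω) - (⟪gradient φ (y ω), z⟫ - ⟪gradient φ (y ω), y ω⟫) := by
      funext ω; simp [bregman, inner_sub_right]
    have hA : Integrable (fun ω => φ z - φ (y ω)) P := (integrable_const _).sub hφy
    have hB : Integrable (fun ω => ⟪gradient φ (y ω), z⟫ - ⟪gradient φ (y ω), y ω⟫) P :=
      (hin z).sub hinner
    rw [h1, integral_sub hA hB, integral_sub (integrable_const (φ z)) hφy,
      integral_sub (hin z) hinner, integral_const]
    have h2 : ∫ ω, ⟪gradient φ (y ω), z⟫ ∂P = ⟪gradient φ μ, z⟫ := by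
      rw [hμ, real_inner_comm, ← integral_inner hgy z]
      exact integral_congr_ae (Filter.Eventually.of_forall fun ω => real_inner_comm _ _)
    rw [h2]
    simp
  rw [key x, key μ]
  have hbx : bregman φ x μ = φ x - φ μ - (⟪gradient φ μ, x⟫ - ⟪gradient φ μ, μ⟫) := by
    simp [bregman, inner_sub_right]
  rw [hbx]
  ring
end

section
/- For a scalar system with parameters a, b ≠ 0 and m > 0 satisfying a²(ε+m) − m > 0, the elastic-net state cost q(x) = |x| + εx² with value-function weight m yields, via the Riccati-like relation p(x) = q(x) + m x² and u*(x) = ∇r*(−(2bm/a)x), the controller u*(x) = −(a/b)x when |2mx/a| ≤ 1, and u*(x) = −(a/b)x + (|2mx/a| − 1)·sign(2mx/a)/(2b(ε+m)) when |2mx/a| > 1; in particular u* is continuous and piecewise linear in x. -/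
/-- One-dimensional Fenchel conjugate. -/
noncomputable def conj1 (f : ℝ → ℝ) (ξ : ℝ) : ℝ := ⨆ x, (ξ * x - f x)

/-! The conjugate of `|x| + c x²` is the Huber-type function `(|ξ| - 1)₊² / (4c)`, attained at
the soft-thresholded point `S(ξ) / (2c)`, where `S(ξ) = sign ξ · (|ξ| - 1)₊`; its derivative is
`S(ξ) / (2c)`. The Riccati relation expresses `r*` as an explicit quadratic minus this conjugate,
so `r*` is differentiable and `∇r*(-(2bm/a)x) = -(a/b)x + S(2mx/a) / (2b(ε + m))`. Both claimed
properties of `u*` are then read off from `S`. -/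

open Asymptotics

def softThreshold (ξ : ℝ) : ℝ := max (ξ - 1) 0 - max (-ξ - 1) 0

@[fun_prop]
theorem continuous_softThreshold : Continuous softThreshold := by
  unfold softThreshold; fun_prop

theorem softThreshold_eq_ite (ξ : ℝ) :
    softThreshold ξ = if |ξ| ≤ 1 then 0 else (|ξ| - 1) * Real.sign ξ := by
  unfold softThreshold
  split_ifs with h
  · rw [abs_le] at h
    rw [max_eq_right (by linarith), max_eq_right (by linarith), sub_zero]
  · rcases lt_abs.mp (not_le.mp h) with h' | h'
    · rw [max_eq_left (by linarith), max_eq_right (by linarith),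
        Real.sign_of_pos (by linarith), abs_of_pos (by linarith)]
      ring
    · rw [max_eq_right (by linarith), max_eq_left (by linarith),
        Real.sign_of_neg (by linarith), abs_of_neg (by linarith)]
      ring

theorem hasDerivAt_max_zero_sq (t : ℝ) :
    HasDerivAt (fun s : ℝ => max s 0 ^ 2) (2 * max t 0) t := by
  have taylor : ∀ s : ℝ,
      |max s 0 ^ 2 - max t 0 ^ 2 - (s - t) * (2 * max t 0)| ≤ |s - t| ^ 2 := by
    intro s
    rw [sq_abs]
    rcases le_total s 0 with hs | hs <;> rcases le_total t 0 with ht | ht <;>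
      simp only [max_eq_left, max_eq_right, hs, ht] <;>
      rw [abs_le] <;> constructor <;> nlinarith
  refine .of_isLittleO (IsBigO.trans_isLittleO ?_ (isLittleO_pow_sub_sub t one_lt_two))
  exact .of_bound 1 (.of_forall fun s => by simpa using taylor s)

theorem max_abs_sub_one_zero_sq (ξ : ℝ) :
    max (|ξ| - 1) 0 ^ 2 = max (ξ - 1) 0 ^ 2 + max (-ξ - 1) 0 ^ 2 := by
  rcases le_total 0 ξ with h | h
  · rw [abs_of_nonneg h, max_eq_right (show -ξ - 1 ≤ 0 by linarith)]
    ring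
  · rw [abs_of_nonpos h, max_eq_right (show ξ - 1 ≤ 0 by linarith)]
    ring

theorem hasDerivAt_max_abs_sub_one_zero_sq (ξ : ℝ) :
    HasDerivAt (fun ξ : ℝ => max (|ξ| - 1) 0 ^ 2) (2 * softThreshold ξ) ξ := by
  rw [funext max_abs_sub_one_zero_sq]
  have right := (hasDerivAt_max_zero_sq (ξ - 1)).comp ξ ((hasDerivAt_id ξ).sub_const 1)
  have left := (hasDerivAt_max_zero_sq (-ξ - 1)).comp ξ ((hasDerivAt_neg ξ).sub_const 1)
  refine (right.add left).congr_deriv ?_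
  simp only [softThreshold]
  ring

theorem conj1_abs_add_mul_sq {c : ℝ} (hc : 0 < c) (ξ : ℝ) :
    conj1 (fun x => |x| + c * x ^ 2) ξ = max (|ξ| - 1) 0 ^ 2 / (4 * c) := by
  set A := max (|ξ| - 1) 0
  have upper : ∀ x, ξ * x - (|x| + c * x ^ 2) ≤ A ^ 2 / (4 * c) := by
    intro x
    have hξx : ξ * x ≤ (A + 1) * |x| :=
      (le_abs_self _).trans <| (abs_mul ξ x).trans_le <|
        mul_le_mul_of_nonneg_right (by linarith [le_max_left (|ξ| - 1) 0]) (abs_nonneg x)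
    rw [le_div_iff₀ (by positivity), ← sq_abs x]
    nlinarith [sq_nonneg (2 * c * |x| - A)]
  have attained : ξ * (softThreshold ξ / (2 * c)) - (|softThreshold ξ / (2 * c)| +
      c * (softThreshold ξ / (2 * c)) ^ 2) = A ^ 2 / (4 * c) := by
    rcases le_total ξ (-1) with h | h
    · have hs : softThreshold ξ = ξ + 1 := by
        rw [softThreshold, max_eq_right (by linarith), max_eq_left (by linarith)]; ring
      have hA : A = -ξ - 1 := by
        simp only [A]
        rw [abs_of_nonpos (by linarith), max_eq_left (by linarith)]
      rw [hs, hA, abs_of_nonpos (div_nonpos_of_nonpos_of_nonneg (by linarith) (by positivity))]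
      field_simp; ring
    rcases le_total ξ 1 with h' | h'
    · have hs : softThreshold ξ = 0 := by
        rw [softThreshold, max_eq_right (by linarith), max_eq_right (by linarith), sub_zero]
      have hA : A = 0 := max_eq_right (by linarith [abs_le.mpr ⟨h, h'⟩])
      simp [hs, hA]
    · have hs : softThreshold ξ = ξ - 1 := by
        rw [softThreshold, max_eq_left (by linarith), max_eq_right (by linarith), sub_zero]
      have hA : A = ξ - 1 := by
        simp only [A]
        rw [abs_of_nonneg (by linarith), max_eq_left (by linarith)]
      rw [hs, hA, abs_of_nonneg (div_nonneg (by linarith) (by positivity))]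
      field_simp; ring
  exact le_antisymm (ciSup_le upper)
    (attained ▸ le_ciSup ⟨_, Set.forall_mem_range.2 upper⟩ _)

theorem hasDerivAt_of_conj1_add_comp_eq {p r : ℝ → ℝ} {a b c m : ℝ} (hb : b ≠ 0)
    (hconj : ∀ ξ, conj1 p ξ = max (|ξ| - 1) 0 ^ 2 / (4 * c))
    (hriccati : ∀ ξ, conj1 p ξ + r (-b * ξ) = a ^ 2 * ξ ^ 2 / (4 * m)) (y : ℝ) :
    HasDerivAt r (a ^ 2 * y / (2 * m * b ^ 2) + softThreshold (-y / b) / (2 * b * c)) y := by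
  have hr : r = fun y => a ^ 2 * (-y / b) ^ 2 / (4 * m) - max (|-y / b| - 1) 0 ^ 2 / (4 * c) := by
    funext y
    have h := hriccati (-y / b)
    rw [hconj, show -b * (-y / b) = y by field_simp] at h
    linarith
  have hinner : HasDerivAt (fun y => -y / b) (-1 / b) y := (hasDerivAt_neg y).div_const b
  rw [hr]
  refine ((((hinner.pow 2).const_mul _).div_const _).sub
    (((hasDerivAt_max_abs_sub_one_zero_sq _).comp y hinner).div_const _)).congr_deriv ?_
  simp only [Nat.cast_ofNat, Nat.add_one_sub_one, pow_one]
  ring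

theorem elastic_net_controller_general
    (a b m ε : ℝ) (ha : a ≠ 0) (hb : b ≠ 0) (hm : 0 < m) (hε : 0 < ε)
    (q p : ℝ → ℝ)
    (hq : ∀ x, q x = |x| + ε * x ^ 2)
    (hp : ∀ x, p x = q x + m * x ^ 2)
    (rstar : ℝ → ℝ)
    (hriccati : ∀ ξ : ℝ, conj1 p ξ + rstar (-b * ξ) = a ^ 2 * ξ ^ 2 / (4 * m))
    (ustar : ℝ → ℝ)
    (hustar : ∀ x, ustar x = deriv rstar (-(2 * b * m / a) * x)) :
    (∀ x : ℝ,
      ustar x =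
        if |2 * m * x / a| ≤ 1 then -(a / b) * x
        else -(a / b) * x +
          (|2 * m * x / a| - 1) * Real.sign (2 * m * x / a) / (2 * b * (ε + m))) ∧
      Continuous ustar := by
  have hp' : p = fun x => |x| + (ε + m) * x ^ 2 := funext fun x => by rw [hp, hq]; ring
  have hconj : ∀ ξ, conj1 p ξ = max (|ξ| - 1) 0 ^ 2 / (4 * (ε + m)) :=
    hp' ▸ conj1_abs_add_mul_sq (by positivity)
  have hu : ∀ x, ustar x = -(a / b) * x + softThreshold (2 * m * x / a) / (2 * b * (ε + m)) := by
    intro x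
    rw [hustar, (hasDerivAt_of_conj1_add_comp_eq hb hconj hriccati _).deriv]
    congr 1
    · field_simp
    · congr 2; field_simp
  refine ⟨fun x => ?_, funext hu ▸ by fun_prop⟩
  rw [hu, softThreshold_eq_ite]
  split_ifs <;> ring

theorem elastic_net_controller
    (a b m ε : ℝ) (ha : a ≠ 0) (hb : b ≠ 0) (hm : 0 < m) (hε : 0 < ε)
    (hstab : a ^ 2 * (ε + m) - m > 0)
    (q p : ℝ → ℝ)
    (hq : ∀ x, q x = |x| + ε * x ^ 2)
    (hp : ∀ x, p x = q x + m * x ^ 2)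
    (rstar : ℝ → ℝ)
    (hrdiff : Differentiable ℝ rstar)
    (hriccati : ∀ ξ : ℝ, conj1 p ξ + rstar (-b * ξ) = a ^ 2 * ξ ^ 2 / (4 * m))
    (ustar : ℝ → ℝ)
    (hustar : ∀ x, ustar x = deriv rstar (-(2 * b * m / a) * x)) :
    (∀ x : ℝ,
      ustar x =
        if |2 * m * x / a| ≤ 1 then -(a / b) * x
        else -(a / b) * x +
          (|2 * m * x / a| - 1) * Real.sign (2 * m * x / a) / (2 * b * (ε + m))) ∧
      Continuous ustar :=
  elastic_net_controller_general a b m ε ha hb hm hε q p hq hp rstar hriccati ustar hustar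
end
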